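/- arXiv:2402.01850 — 4 statements merged into one kernel-verified Lean document; each statement's English description precedes it below -/
import Mathlib

section
/- Let (V, ω) be a real symplectic vector space, W a finite-dimensional real vector space, and A : W × W → End(V) an alternating bilinear map all of whose values are ω-symmetric endomorphisms of V. If q is an odd natural number, then the alternatization of the 2q-linear form (w₁, …, w_{2q}) ↦ tr(A(w₁, w₂) ∘ A(w₃, w₄) ∘ ⋯ ∘ A(w_{2q−1}, w_{2q})) on W is identically zero. -/
/-!
Identifying `V` with its dual through a nondegenerate alternating form `ω` turns every
`ω`-symmetric endomorphism `S` into `-Sᵀ`. Transposition reverses products and preserves traces,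
so `tr (S₁ ⋯ Sₙ) = (-1) ^ n * tr (Sₙ ⋯ S₁)`. Reversing the order of the `q` pairs of slots
`(1, 2), …, (2q - 1, 2q)` is an even permutation that reverses the product
`A(w₁, w₂) ⋯ A(w_{2q-1}, w_{2q})`; for odd `q` it therefore pairs every term of the alternating
sum with its negative.
-/

open Module Equiv

theorem LinearMap.list_prod_map_dualMap {R M : Type*} [CommSemiring R] [AddCommMonoid M]
    [Module R M] (l : List (Module.End R M)) :
    (l.map LinearMap.dualMap).prod = l.reverse.prod.dualMap := by
  induction l with
  | nil => exact LinearMap.dualMap_id.symm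
  | cons S l ih =>
    rw [List.map_cons, List.prod_cons, ih, List.reverse_cons, List.prod_append,
      List.prod_singleton]
    rfl

theorem LinearMap.trace_list_prod_map_neg {R M : Type*} [CommRing R] [AddCommGroup M]
    [Module R M] (l : List (Module.End R M)) :
    trace R M (l.map Neg.neg).prod = (-1) ^ l.length * trace R M l.prod := by
  rw [List.prod_map_neg, ← map_one (algebraMap R (Module.End R M)), ← map_neg, ← map_pow,
    ← Algebra.smul_def, map_smul, smul_eq_mul]

namespace LinearMap.BilinForm

variable {K V : Type*} [Field K] [AddCommGroup V] [Module K V] [FiniteDimensional K V]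
  {ω : LinearMap.BilinForm K V}

theorem conj_toDual_eq_neg_dualMap (hω : ω.Nondegenerate) (hω_alt : ω.IsAlt)
    {S : Module.End K V} (hS : ∀ u v, ω (S u) v = ω (S v) u) :
    (ω.toDual hω).conj S = -S.dualMap := by
  ext φ v
  rw [LinearEquiv.conj_apply_apply, toDual_def, hS, ← LinearMap.IsAlt.neg hω_alt _ (S v),
    apply_toDual_symm_apply]
  rfl

theorem trace_list_prod_reverse (hω_alt : ω.IsAlt) (hω : ω.SeparatingLeft)
    (l : List (Module.End K V)) (hl : ∀ S ∈ l, ∀ u v, ω (S u) v = ω (S v) u) :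
    trace K V l.reverse.prod = (-1) ^ l.length * trace K V l.prod := by
  have hnd : ω.Nondegenerate := hω_alt.isRefl.nondegenerate_iff_separatingLeft.mpr hω
  set duals : List (Module.End K (Dual K V)) := l.map LinearMap.dualMap
  have hconj : l.map ((ω.toDual hnd).conjAlgEquiv K) = duals.map Neg.neg := by
    rw [List.map_map]
    exact List.map_congr_left fun S hS => conj_toDual_eq_neg_dualMap hnd hω_alt (hl S hS)
  calc trace K V l.reverse.prod
      = trace K (Dual K V) duals.prod := by
        rw [LinearMap.list_prod_map_dualMap, LinearMap.dualMap_def, trace_transpose']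
    _ = (-1) ^ l.length * trace K (Dual K V) (duals.map Neg.neg).prod := by
        rw [LinearMap.trace_list_prod_map_neg, List.length_map, ← mul_assoc, ← mul_pow,
          neg_one_mul, neg_neg, one_pow, one_mul]
    _ = (-1) ^ l.length * trace K V l.prod := by
        rw [← hconj, ← map_list_prod]
        exact congrArg _ (trace_conj' _ _)

end LinearMap.BilinForm

theorem List.ofFn_comp_rev {α : Type*} {n : ℕ} (f : Fin n → α) :
    List.ofFn (f ∘ Fin.rev) = (List.ofFn f).reverse := by
  refine List.ext_getElem (by simp) fun i h₁ h₂ => ?_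
  simp only [Function.comp_apply, List.getElem_ofFn, List.getElem_reverse, List.length_ofFn]
  congr 1
  ext
  simp only [Fin.val_rev]
  omega

def finPairEquiv (q : ℕ) : Fin q × Fin 2 ≃ Fin (2 * q) where
  toFun x := ⟨2 * x.1 + x.2, by omega⟩
  invFun k := (⟨k / 2, by omega⟩, ⟨k % 2, by omega⟩)
  left_inv x := by ext <;> simp only <;> omega
  right_inv k := by ext; simp only; omega

def reversePairs (q : ℕ) : Perm (Fin (2 * q)) :=
  (finPairEquiv q).permCongr (prodCongrLeft fun _ => Fin.revPerm)

theorem sign_reversePairs (q : ℕ) : Perm.sign (reversePairs q) = 1 := by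
  rw [reversePairs, Perm.sign_permCongr, Perm.sign_prodCongrLeft, Fin.prod_univ_two,
    Int.units_mul_self]

theorem reversePairs_finPairEquiv {q : ℕ} (i : Fin q) (c : Fin 2) :
    reversePairs q (finPairEquiv q (i, c)) = finPairEquiv q (i.rev, c) := by
  simp [reversePairs, permCongr_apply]

def pairProducts {α M : Type*} {q : ℕ} (B : α → α → M) (v : Fin (2 * q) → α) : List M :=
  List.ofFn fun i => B (v (finPairEquiv q (i, 0))) (v (finPairEquiv q (i, 1)))

@[simp]
theorem length_pairProducts {α M : Type*} {q : ℕ} (B : α → α → M) (v : Fin (2 * q) → α) :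
    (pairProducts B v).length = q :=
  List.length_ofFn

theorem pairProducts_comp_reversePairs {α M : Type*} {q : ℕ} (B : α → α → M)
    (v : Fin (2 * q) → α) :
    pairProducts B (v ∘ reversePairs q) = (pairProducts B v).reverse := by
  simp only [pairProducts, Function.comp_apply, reversePairs_finPairEquiv]
  exact List.ofFn_comp_rev fun i => B (v (finPairEquiv q (i, 0))) (v (finPairEquiv q (i, 1)))

theorem Fintype.sum_eq_zero_of_comp_eq_neg {ι M : Type*} [Fintype ι] [AddCommGroup M]
    [IsAddTorsionFree M] (f : ι → M) (e : Perm ι) (h : ∀ x, f (e x) = -f x) :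
    ∑ x, f x = 0 := by
  refine self_eq_neg.mp ?_
  calc ∑ x, f x = ∑ x, f (e x) := (Equiv.sum_comp e f).symm
    _ = -∑ x, f x := by simp only [h, Finset.sum_neg_distrib]

/-- If A : W × W → End(V) is an alternating bilinear map whose values
are ω-symmetric endomorphisms of a real symplectic vector space (V, ω), and q is odd,
then the alternatization of the 2q-linear form
(w₁, …, w_{2q}) ↦ tr(A(w₁,w₂) ∘ ⋯ ∘ A(w_{2q−1},w_{2q})) on W vanishes identically. -/
theorem statement_2 (V W : Type*) [AddCommGroup V] [Module ℝ V] [FiniteDimensional ℝ V]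
    [AddCommGroup W] [Module ℝ W]
    (ω : V →ₗ[ℝ] V →ₗ[ℝ] ℝ)
    (halt : ∀ x, ω x x = 0)
    (hnd : ∀ x, (∀ y, ω x y = 0) → x = 0)
    (A : W →ₗ[ℝ] W →ₗ[ℝ] Module.End ℝ V)
    (hAsym : ∀ w₁ w₂ u v, ω (A w₁ w₂ u) v = ω (A w₁ w₂ v) u)
    (q : ℕ) (hq : Odd q) (w : Fin (2 * q) → W) :
    ∑ σ : Equiv.Perm (Fin (2 * q)), ((Equiv.Perm.sign σ : ℤ) : ℝ) *
      LinearMap.trace ℝ V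
        (List.ofFn (fun i : Fin q =>
          A (w (σ ⟨2 * i.val, by have := i.isLt; omega⟩))
            (w (σ ⟨2 * i.val + 1, by have := i.isLt; omega⟩)))).prod = 0 := by
  change ∑ σ : Perm (Fin (2 * q)), ((Perm.sign σ : ℤ) : ℝ) *
    LinearMap.trace ℝ V (pairProducts (fun a b => A a b) (w ∘ σ)).prod = 0
  refine Fintype.sum_eq_zero_of_comp_eq_neg _ (Equiv.mulRight (reversePairs q)) fun σ => ?_
  have hsymm : ∀ S ∈ pairProducts (fun a b => A a b) (w ∘ σ), ∀ u v, ω (S u) v = ω (S v) u := by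
    simp only [pairProducts, List.mem_ofFn]
    rintro _ ⟨i, rfl⟩
    exact hAsym _ _
  simp only [Equiv.coe_mulRight]
  rw [Perm.coe_mul, ← Function.comp_assoc, pairProducts_comp_reversePairs,
    LinearMap.BilinForm.trace_list_prod_reverse halt hnd _ hsymm, length_pairProducts,
    hq.neg_one_pow, Perm.sign_mul, sign_reversePairs, mul_one]
  ring
end

section
/- Let (V, ω) be a real symplectic vector space and R ∈ 𝓡(V) an algebraic symplectic curvature tensor. If q is an odd natural number, then the Chern generator c_q(R) is the zero 2q-form on V; consequently, every Chern 2q-form of R with q odd vanishes. -/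
noncomputable section

variable {V : Type*} [AddCommGroup V] [Module ℝ V]

/-- Product R̂(x₁,x₂) ∘ R̂(x₃,x₄) ∘ ⋯ of endomorphisms read off from a list of
vectors, taken in consecutive pairs. -/
def endProdA (Rhat : V →ₗ[ℝ] V →ₗ[ℝ] Module.End ℝ V) : List V → Module.End ℝ V
  | [] => 1
  | [_] => 1
  | c :: w :: rest => Rhat c w * endProdA Rhat rest

/-- Pre-Chern form attached to a list of degrees `l = [q₁, …, q_s]`: the product of
the traces tr(R̂ ∘ ⋯ ∘ R̂) over consecutive blocks of 2q₁, 2q₂, … vectors.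
Its alternatization is (up to a nonzero constant) the Chern form c_{q₁} ∧ ⋯ ∧ c_{q_s}. -/
def preChernA (Rhat : V →ₗ[ℝ] V →ₗ[ℝ] Module.End ℝ V) : List ℕ → List V → ℝ
  | [], _ => 1
  | a :: rest, xs =>
      LinearMap.trace ℝ V (endProdA Rhat (xs.take (2 * a))) *
        preChernA Rhat rest (xs.drop (2 * a))

/-! Each `R̂(z, w)` lies in `𝔰𝔭(V, ω)` because `R` is symmetric in its first two arguments.
The `ω`-adjoint is a trace-preserving anti-automorphism of `End V` acting as `-1` on `𝔰𝔭(V, ω)`,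
so `tr(A₁ ⋯ Aₐ) = (-1)ᵃ tr(Aₐ ⋯ A₁)` for `Aᵢ ∈ 𝔰𝔭(V, ω)`. Reversing the order of the `a` pairs
of arguments in one block is an even permutation; when `a` is odd it therefore flips the sign of
the integrand but not of the permutation, so the alternatization equals its own negative. A list
of degrees with odd sum always contains an odd degree. -/

namespace List

variable {α : Type*}

def reversePairs : List α → List α
  | [] => []
  | [x] => [x]
  | x :: y :: rest => reversePairs rest ++ [x, y]

@[simp]
theorem length_reversePairs (xs : List α) : xs.reversePairs.length = xs.length := by
  induction xs using reversePairs.induct <;> simp [reversePairs, *]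

theorem getElem_reversePairs {xs : List α} (hxs : Even xs.length) (j : ℕ) (hj : j < xs.length) :
    xs.reversePairs[j]'(by simpa) = xs[xs.length - 2 - 2 * (j / 2) + j % 2]'(by grind) := by
  induction xs using reversePairs.induct generalizing j with
  | case1 => simp at hj
  | case2 x => simp at hxs
  | case3 x y rest ih =>
    simp only [length_cons, Nat.even_add_one, not_not] at hxs hj
    have := Nat.even_iff.mp hxs
    simp only [reversePairs, getElem_append, length_reversePairs]
    split_ifs with hlt
    · rw [ih hxs j hlt]
      simp only [length_cons, getElem_cons]
      split_ifs <;> first | omega | (congr 1; omega)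
    · simp only [length_cons, getElem_cons]
      split_ifs <;> first | rfl | omega

end List

section DualAdjoint

variable {R M : Type*} [CommRing R] [AddCommGroup M] [Module R M]

open Module

def dualAdjoint (e : M ≃ₗ[R] Dual R M) (f : Module.End R M) : Module.End R M :=
  e.symm.conj (Dual.transpose (R := R) f)

theorem dualAdjoint_one (e : M ≃ₗ[R] Dual R M) : dualAdjoint e 1 = 1 := by
  ext x
  simp [dualAdjoint, LinearEquiv.conj_apply_apply, Module.End.one_eq_id, Dual.transpose_apply]

theorem dualAdjoint_mul (e : M ≃ₗ[R] Dual R M) (f g : Module.End R M) :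
    dualAdjoint e (f * g) = dualAdjoint e g * dualAdjoint e f := by
  simp only [dualAdjoint, Module.End.mul_eq_comp, Dual.transpose_comp, LinearEquiv.conj_comp]

theorem trace_dualAdjoint [Free R M] [Module.Finite R M] (e : M ≃ₗ[R] Dual R M)
    (f : Module.End R M) : LinearMap.trace R M (dualAdjoint e f) = LinearMap.trace R M f := by
  rw [dualAdjoint, LinearMap.trace_conj', LinearMap.trace_transpose']

theorem dualAdjoint_eq_neg (e : M ≃ₗ[R] Dual R M) {f : Module.End R M}
    (hf : ∀ x y, e (f x) y = -e x (f y)) : dualAdjoint e f = -f := by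
  ext x
  apply e.injective
  ext y
  simp [dualAdjoint, LinearEquiv.conj_apply_apply, Dual.transpose_apply, hf]

end DualAdjoint

theorem endProdA_append_pair (Rhat : V →ₗ[ℝ] V →ₗ[ℝ] Module.End ℝ V) {xs : List V}
    (hxs : Even xs.length) (x y : V) :
    endProdA Rhat (xs ++ [x, y]) = endProdA Rhat xs * Rhat x y := by
  induction xs using endProdA.induct with
  | case1 => simp [endProdA]
  | case2 => simp at hxs
  | case3 c w rest ih =>
    simp only [List.length_cons, Nat.even_add_one, not_not] at hxs
    simp only [List.cons_append, endProdA, ih hxs, mul_assoc]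

theorem dualAdjoint_endProdA (e : V ≃ₗ[ℝ] Module.Dual ℝ V)
    {Rhat : V →ₗ[ℝ] V →ₗ[ℝ] Module.End ℝ V} (hA : ∀ z w, dualAdjoint e (Rhat z w) = -Rhat z w)
    {xs : List V} (hxs : Even xs.length) :
    dualAdjoint e (endProdA Rhat xs) =
      (-1 : ℝ) ^ (xs.length / 2) • endProdA Rhat xs.reversePairs := by
  induction xs using endProdA.induct with
  | case1 => simp [endProdA, List.reversePairs, dualAdjoint_one]
  | case2 => simp at hxs
  | case3 c w rest ih =>
    simp only [List.length_cons, Nat.even_add_one, not_not] at hxs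
    rw [endProdA, List.reversePairs, dualAdjoint_mul, ih hxs, hA,
      endProdA_append_pair Rhat (by simpa using hxs)]
    have : (c :: w :: rest).length / 2 = rest.length / 2 + 1 := by
      simp only [List.length_cons]; omega
    rw [this, pow_succ, smul_mul_assoc, mul_neg, smul_neg, mul_neg_one, neg_smul]

theorem trace_endProdA_reversePairs [FiniteDimensional ℝ V] (e : V ≃ₗ[ℝ] Module.Dual ℝ V)
    {Rhat : V →ₗ[ℝ] V →ₗ[ℝ] Module.End ℝ V} (hA : ∀ z w, dualAdjoint e (Rhat z w) = -Rhat z w)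
    {xs : List V} {a : ℕ} (hxs : xs.length = 2 * a) :
    LinearMap.trace ℝ V (endProdA Rhat xs.reversePairs) =
      (-1 : ℝ) ^ a * LinearMap.trace ℝ V (endProdA Rhat xs) := by
  have h := trace_dualAdjoint e (endProdA Rhat xs)
  rw [dualAdjoint_endProdA e hA (by simp [hxs]), map_smul, smul_eq_mul, hxs,
    Nat.mul_div_cancel_left a two_pos] at h
  rw [← h, ← mul_assoc, ← pow_add, ← two_mul, pow_mul, neg_one_sq, one_pow, one_mul]

section ReversePairsPerm

-- Exchanges the `k`-th and `(a - 1 - k)`-th pairs of positions of the block `[2m, 2m + 2a)`.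
def reversePairsIdx (m a i : ℕ) : ℕ :=
  if 2 * m ≤ i ∧ i < 2 * m + 2 * a then
    2 * m + (2 * a - 2 - 2 * ((i - 2 * m) / 2) + (i - 2 * m) % 2)
  else i

theorem reversePairsIdx_lt {n m a i : ℕ} (h : 2 * m + 2 * a ≤ n) (hi : i < n) :
    reversePairsIdx m a i < n := by
  unfold reversePairsIdx; split_ifs <;> omega

theorem reversePairsIdx_involutive (m a : ℕ) : Function.Involutive (reversePairsIdx m a) := by
  intro i; unfold reversePairsIdx; split_ifs <;> omega

def reversePairsPerm {n : ℕ} (m a : ℕ) (h : 2 * m + 2 * a ≤ n) : Equiv.Perm (Fin n) :=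
  Function.Involutive.toPerm (fun i => ⟨reversePairsIdx m a i, reversePairsIdx_lt h i.2⟩)
    fun i => Fin.ext (reversePairsIdx_involutive m a i)

@[simp]
theorem reversePairsPerm_apply_val {n m a : ℕ} (h : 2 * m + 2 * a ≤ n) (i : Fin n) :
    (reversePairsPerm m a h i : ℕ) = reversePairsIdx m a i := rfl

theorem reversePairsPerm_of_le_one {n m a : ℕ} (h : 2 * m + 2 * a ≤ n) (ha : a ≤ 1) :
    reversePairsPerm m a h = 1 := by
  ext i
  simp only [reversePairsPerm_apply_val, reversePairsIdx, Equiv.Perm.coe_one, id_eq]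
  split_ifs <;> omega

theorem reversePairsPerm_add_two {n m a : ℕ} (h : 2 * m + 2 * (a + 2) ≤ n) :
    reversePairsPerm m (a + 2) h =
      Equiv.swap (⟨2 * m, by omega⟩ : Fin n) ⟨2 * m + 2 * a + 2, by omega⟩ *
        Equiv.swap (⟨2 * m + 1, by omega⟩ : Fin n) ⟨2 * m + 2 * a + 3, by omega⟩ *
          reversePairsPerm (m + 1) a (by omega) := by
  ext i
  simp only [reversePairsPerm_apply_val, Equiv.Perm.mul_apply, Equiv.swap_apply_def,
    Fin.ext_iff, apply_ite Fin.val, reversePairsIdx]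
  split_ifs <;> omega

theorem sign_reversePairsPerm {n m a : ℕ} (h : 2 * m + 2 * a ≤ n) :
    Equiv.Perm.sign (reversePairsPerm m a h) = 1 := by
  induction a using Nat.strong_induction_on generalizing m with
  | _ a ih =>
    match a with
    | 0 | 1 => rw [reversePairsPerm_of_le_one h (by omega), map_one]
    | a + 2 =>
      rw [reversePairsPerm_add_two, map_mul, map_mul, ih a (by omega),
        Equiv.Perm.sign_swap (by simp only [ne_eq, Fin.mk.injEq]; omega),
        Equiv.Perm.sign_swap (by simp only [ne_eq, Fin.mk.injEq]; omega)]
      rfl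

theorem ofFn_comp_reversePairsPerm {α : Type*} {n m a : ℕ} (h : 2 * m + 2 * a ≤ n)
    (u : Fin n → α) :
    List.ofFn (u ∘ reversePairsPerm m a h) =
      (List.ofFn u).take (2 * m) ++ (((List.ofFn u).drop (2 * m)).take (2 * a)).reversePairs ++
        (List.ofFn u).drop (2 * m + 2 * a) := by
  have hmid : (((List.ofFn u).drop (2 * m)).take (2 * a)).length = 2 * a := by
    simp only [List.length_take, List.length_drop, List.length_ofFn]; omega
  apply List.ext_getElem
  · simp only [List.length_ofFn, List.length_append, List.length_take, List.length_reversePairs,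
      hmid, List.length_drop]
    omega
  intro j h₁ h₂
  simp only [List.length_ofFn] at h₁
  simp only [List.getElem_ofFn, Function.comp_apply, List.getElem_append, List.length_append,
    List.length_take, List.length_reversePairs, hmid, List.length_ofFn]
  split_ifs with hj₁ hj₂
  · simp only [List.getElem_take, List.getElem_ofFn]
    congr 1; ext; simp only [reversePairsPerm_apply_val, reversePairsIdx]; split_ifs <;> omega
  · rw [List.getElem_reversePairs (by simp [hmid]) _ (by rw [hmid]; omega)]
    simp only [List.getElem_take, List.getElem_drop, List.getElem_ofFn, hmid]
    congr 1; ext; simp only [reversePairsPerm_apply_val, reversePairsIdx]; split_ifs <;> omega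
  · simp only [List.getElem_drop, List.getElem_ofFn]
    congr 1; ext; simp only [reversePairsPerm_apply_val, reversePairsIdx]; split_ifs <;> omega

end ReversePairsPerm

theorem preChernA_append (Rhat : V →ₗ[ℝ] V →ₗ[ℝ] Module.End ℝ V) (l₁ l₂ : List ℕ)
    (xs : List V) :
    preChernA Rhat (l₁ ++ l₂) xs =
      preChernA Rhat l₁ (xs.take (2 * l₁.sum)) * preChernA Rhat l₂ (xs.drop (2 * l₁.sum)) := by
  induction l₁ generalizing xs with
  | nil => simp [preChernA]
  | cons a t ih =>
    simp only [List.cons_append, preChernA, List.sum_cons, ih, List.take_take, List.drop_take,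
      List.drop_drop, mul_assoc]
    congr 4 <;> omega

theorem preChernA_reversePairs_block [FiniteDimensional ℝ V] (e : V ≃ₗ[ℝ] Module.Dual ℝ V)
    {Rhat : V →ₗ[ℝ] V →ₗ[ℝ] Module.End ℝ V} (hA : ∀ z w, dualAdjoint e (Rhat z w) = -Rhat z w)
    (l₁ l₂ : List ℕ) {a : ℕ} (ha : Odd a) {xs : List V} (h : 2 * l₁.sum + 2 * a ≤ xs.length) :
    preChernA Rhat (l₁ ++ a :: l₂) (xs.take (2 * l₁.sum) ++
        ((xs.drop (2 * l₁.sum)).take (2 * a)).reversePairs ++ xs.drop (2 * l₁.sum + 2 * a)) =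
      -preChernA Rhat (l₁ ++ a :: l₂) xs := by
  have hpre : (xs.take (2 * l₁.sum)).length = 2 * l₁.sum := by simp only [List.length_take]; omega
  have hmid : ((xs.drop (2 * l₁.sum)).take (2 * a)).length = 2 * a := by
    simp only [List.length_take, List.length_drop]; omega
  have hmid' : ((xs.drop (2 * l₁.sum)).take (2 * a)).reversePairs.length = 2 * a := by
    rw [List.length_reversePairs, hmid]
  rw [List.append_assoc, preChernA_append, preChernA_append, List.take_left' hpre,
    List.drop_left' hpre]
  simp only [preChernA, List.take_left' hmid', List.drop_left' hmid', List.drop_drop,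
    trace_endProdA_reversePairs e hA hmid, ha.neg_one_pow]
  ring

theorem sum_sign_mul_eq_zero_of_mul_right_eq_neg {α R : Type*} [Fintype α] [DecidableEq α]
    [CommRing R] [IsAddTorsionFree R] {τ : Equiv.Perm α} (hτ : Equiv.Perm.sign τ = 1)
    {f : Equiv.Perm α → R} (hf : ∀ σ, f (σ * τ) = -f σ) :
    ∑ σ, ((Equiv.Perm.sign σ : ℤ) : R) * f σ = 0 := by
  refine self_eq_neg.mp ?_
  calc ∑ σ, ((Equiv.Perm.sign σ : ℤ) : R) * f σ
      = ∑ σ, ((Equiv.Perm.sign (σ * τ) : ℤ) : R) * f (σ * τ) :=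
        (Equiv.sum_comp (Equiv.mulRight τ) _).symm
    _ = -∑ σ, ((Equiv.Perm.sign σ : ℤ) : R) * f σ := by
        simp only [map_mul, hτ, mul_one, hf, mul_neg, Finset.sum_neg_distrib]

theorem exists_odd_mem_of_odd_sum {l : List ℕ} (hl : Odd l.sum) : ∃ a ∈ l, Odd a := by
  by_contra! h
  refine Nat.not_odd_iff_even.mpr ?_ hl
  exact List.sum_induction Even (fun _ _ => Even.add) Even.zero fun a ha =>
    Nat.not_odd_iff_even.mp (h a ha)

theorem sum_sign_mul_preChernA_eq_zero [FiniteDimensional ℝ V] (e : V ≃ₗ[ℝ] Module.Dual ℝ V)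
    {Rhat : V →ₗ[ℝ] V →ₗ[ℝ] Module.End ℝ V} (hA : ∀ z w, dualAdjoint e (Rhat z w) = -Rhat z w)
    {q : ℕ} (hq : Odd q) {l : List ℕ} (hl : l.sum = q) (v : Fin (2 * q) → V) :
    ∑ σ : Equiv.Perm (Fin (2 * q)), ((Equiv.Perm.sign σ : ℤ) : ℝ) *
      preChernA Rhat l (List.ofFn (fun i => v (σ i))) = 0 := by
  obtain ⟨a, hal, ha⟩ := exists_odd_mem_of_odd_sum (hl ▸ hq)
  obtain ⟨l₁, l₂, rfl⟩ := List.append_of_mem hal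
  have h : 2 * l₁.sum + 2 * a ≤ 2 * q := by simp only [List.sum_append, List.sum_cons] at hl; omega
  refine sum_sign_mul_eq_zero_of_mul_right_eq_neg (sign_reversePairsPerm h) fun σ => ?_
  have hlen : 2 * l₁.sum + 2 * a ≤ (List.ofFn (v ∘ σ)).length := by rwa [List.length_ofFn]
  change preChernA Rhat _ (List.ofFn ((v ∘ σ) ∘ reversePairsPerm l₁.sum a h)) = _
  rw [ofFn_comp_reversePairsPerm, preChernA_reversePairs_block e hA l₁ l₂ ha hlen]
  rfl

theorem statement_3_general [FiniteDimensional ℝ V]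
    (ω : V →ₗ[ℝ] V →ₗ[ℝ] ℝ)
    (halt : ∀ x, ω x x = 0)
    (hnd : ∀ x, (∀ y, ω x y = 0) → x = 0)
    (R : MultilinearMap ℝ (fun _ : Fin 4 => V) ℝ)
    (hsym : ∀ v : Fin 4 → V, R (fun t => v (Equiv.swap (0 : Fin 4) 1 t)) = R v)
    (Rhat : V →ₗ[ℝ] V →ₗ[ℝ] Module.End ℝ V)
    (hRhat : ∀ z w x y : V, ω (Rhat z w x) y = R ![x, y, z, w])
    (q : ℕ) (hq : Odd q) :
    (∀ v : Fin (2 * q) → V,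
      ∑ σ : Equiv.Perm (Fin (2 * q)), ((Equiv.Perm.sign σ : ℤ) : ℝ) *
        preChernA Rhat [q] (List.ofFn (fun i => v (σ i))) = 0) ∧
    (∀ l : List ℕ, l.sum = q → (∀ a ∈ l, 1 ≤ a) →
      ∀ v : Fin (2 * q) → V,
        ∑ σ : Equiv.Perm (Fin (2 * q)), ((Equiv.Perm.sign σ : ℤ) : ℝ) *
          preChernA Rhat l (List.ofFn (fun i => v (σ i))) = 0) := by
  have hω : ω.IsAlt := halt
  let e := LinearMap.BilinForm.toDual ω (hω.isRefl.nondegenerate_iff_separatingLeft.2 hnd)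
  have hR : ∀ x y z w : V, R ![x, y, z, w] = R ![y, x, z, w] := fun x y z w => by
    rw [← hsym]
    congr 1
    funext t
    fin_cases t <;> rfl
  have hA : ∀ z w, dualAdjoint e (Rhat z w) = -Rhat z w := fun z w =>
    dualAdjoint_eq_neg e fun x y => by
      simp only [e, LinearMap.BilinForm.toDual_def, hRhat, hR x y, ← hω.neg, neg_neg]
  exact ⟨sum_sign_mul_preChernA_eq_zero e hA hq (by simp),
    fun l hl _ => sum_sign_mul_preChernA_eq_zero e hA hq hl⟩

/-- for an algebraic symplectic curvature tensor R on a real symplectic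
vector space (V, ω) and q odd, the Chern generator c_q(R) is the zero 2q-form;
consequently every Chern 2q-form of R (a wedge product of Chern generators with total
degree 2q, i.e. the alternatization of the block product attached to any list of
degrees summing to q) vanishes. -/
theorem statement_3 [FiniteDimensional ℝ V]
    (ω : V →ₗ[ℝ] V →ₗ[ℝ] ℝ)
    (halt : ∀ x, ω x x = 0)
    (hnd : ∀ x, (∀ y, ω x y = 0) → x = 0)
    (R : MultilinearMap ℝ (fun _ : Fin 4 => V) ℝ)
    (hsym : ∀ v : Fin 4 → V, R (fun t => v (Equiv.swap (0 : Fin 4) 1 t)) = R v)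
    (hanti : ∀ v : Fin 4 → V, R (fun t => v (Equiv.swap (2 : Fin 4) 3 t)) = - R v)
    (hbianchi : ∀ v : Fin 4 → V,
      R v + R (fun t => v (![0, 2, 3, 1] t)) + R (fun t => v (![0, 3, 1, 2] t)) = 0)
    (Rhat : V →ₗ[ℝ] V →ₗ[ℝ] Module.End ℝ V)
    (hRhat : ∀ z w x y : V, ω (Rhat z w x) y = R ![x, y, z, w])
    (q : ℕ) (hq : Odd q) :
    (∀ v : Fin (2 * q) → V,
      ∑ σ : Equiv.Perm (Fin (2 * q)), ((Equiv.Perm.sign σ : ℤ) : ℝ) *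
        preChernA Rhat [q] (List.ofFn (fun i => v (σ i))) = 0) ∧
    (∀ l : List ℕ, l.sum = q → (∀ a ∈ l, 1 ≤ a) →
      ∀ v : Fin (2 * q) → V,
        ∑ σ : Equiv.Perm (Fin (2 * q)), ((Equiv.Perm.sign σ : ℤ) : ℝ) *
          preChernA Rhat l (List.ofFn (fun i => v (σ i))) = 0) :=
  statement_3_general ω halt hnd R hsym Rhat hRhat q hq

end
end

section
/- Let V be a finite-dimensional real vector space, m ≥ 0, and T ∈ N_m(V) a normal tensor of order m. Then for any choice of three distinct argument positions of T (among its m+3 arguments), the alternation of T over those three arguments vanishes; that is, the sum over the six permutations σ of the three chosen positions of sgn(σ) times T with those three arguments permuted by σ is identically zero. -/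
noncomputable section

/-- `N`-linear forms on ℝ^d. -/
abbrev MForm (d N : ℕ) := MultilinearMap ℝ (fun _ : Fin N => (Fin d → ℝ)) ℝ

/-- standard basis vector of ℝ^d. -/
def bvec (d : ℕ) (i : Fin d) : Fin d → ℝ := Pi.single i 1

/-- Components of the standard symplectic form ω = Σ dx_i ∧ dy_i of ℝ^d (d even),
with coordinates ordered as (x₁, y₁, x₂, y₂, …), so that the span of the first
2n coordinates is a symplectic subspace. -/
def stdJ (d : ℕ) (i j : Fin d) : ℝ :=
  if i.val + 1 = j.val ∧ Even i.val then 1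
  else if j.val + 1 = i.val ∧ Even j.val then -1 else 0

/-- The standard symplectic form of ℝ^d as a bilinear function. -/
def stdSymp (d : ℕ) (u v : Fin d → ℝ) : ℝ := ∑ i, ∑ j, stdJ d i j * u i * v j

/-- Membership in the symplectic group Sp(d, ℝ): a linear endomorphism of ℝ^d
preserving the standard symplectic form (for d even this forces invertibility). -/
def IsSp (d : ℕ) (g : (Fin d → ℝ) →ₗ[ℝ] (Fin d → ℝ)) : Prop :=
  ∀ u v, stdSymp d (g u) (g v) = stdSymp d u v

/-- The standard symplectic embedding ℝ^d ↪ ℝ^{d+2} (first d coordinates). -/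
def inclL (d : ℕ) : (Fin d → ℝ) →ₗ[ℝ] (Fin (d + 2) → ℝ) where
  toFun u j := if h : j.val < d then u ⟨j.val, h⟩ else 0
  map_add' u v := by funext j; by_cases h : j.val < d <;> simp [h]
  map_smul' c u := by funext j; by_cases h : j.val < d <;> simp [h]

/-- The symplectic projection ℝ^{d+2} → ℝ^d (forget the last two coordinates). -/
def projL (d : ℕ) : (Fin (d + 2) → ℝ) →ₗ[ℝ] (Fin d → ℝ) :=
  LinearMap.funLeft ℝ ℝ (Fin.castLE (by omega))

/-- Action of a linear endomorphism on multilinear forms (precomposition in every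
slot); for g in Sp this realizes the Sp-action on multilinear forms. -/
def actF {d N : ℕ} (g : (Fin d → ℝ) →ₗ[ℝ] (Fin d → ℝ)) (T : MForm d N) : MForm d N :=
  T.compLinearMap (fun _ => g)

/-- Pullback of a multilinear form on ℝ^d to ℝ^{d+2} along the symplectic projection. -/
def pbF {d N : ℕ} (T : MForm d N) : MForm (d + 2) N :=
  T.compLinearMap (fun _ => projL d)

/-- Restriction of a multilinear form on ℝ^{d+2} to the subspace ℝ^d. -/
def resF {d N : ℕ} (T : MForm (d + 2) N) : MForm d N :=
  T.compLinearMap (fun _ => inclL d)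

/-- Algebraic symplectic curvature tensors: 4-linear forms symmetric in the first two
arguments, antisymmetric in the last two, satisfying the first Bianchi identity. -/
def IsCurv {d : ℕ} (T : MForm d 4) : Prop :=
  (∀ v : Fin 4 → (Fin d → ℝ), T (fun t => v (Equiv.swap (0 : Fin 4) 1 t)) = T v) ∧
  (∀ v : Fin 4 → (Fin d → ℝ), T (fun t => v (Equiv.swap (2 : Fin 4) 3 t)) = - T v) ∧
  (∀ v : Fin 4 → (Fin d → ℝ),
    T v + T (fun t => v (![0, 2, 3, 1] t)) + T (fun t => v (![0, 3, 1, 2] t)) = 0)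

/-- Curvature symmetries, in components. -/
def IsCurvC {d : ℕ} (Rc : Fin d → Fin d → Fin d → Fin d → ℝ) : Prop :=
  (∀ i j k l, Rc j i k l = Rc i j k l) ∧
  (∀ i j k l, Rc i j l k = - Rc i j k l) ∧
  (∀ x y z w, Rc x y z w + Rc x z w y + Rc x w y z = 0)

/-- Components of a 4-linear form in the standard basis. -/
def comp4 {d : ℕ} (T : MForm d 4) (i j k l : Fin d) : ℝ :=
  T (fun t => bvec d (![i, j, k, l] t))

/-- Matrix entries (a, b) of the endomorphism R̂(e_c, e_e) determined by
ω(R̂(z,w)x, y) = R(x,y,z,w), raising the index with Ω'. -/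
def rhatC {d : ℕ} (Ω' : Fin d → Fin d → ℝ) (Rc : Fin d → Fin d → Fin d → Fin d → ℝ)
    (c e a b : Fin d) : ℝ :=
  ∑ y, Rc b y c e * Ω' a y

/-- Matrix of the product R̂(x₁,x₂) ∘ R̂(x₃,x₄) ∘ ⋯ over consecutive pairs of a list
of basis indices. -/
def endProdC {d : ℕ} (Ω' : Fin d → Fin d → ℝ) (Rc : Fin d → Fin d → Fin d → Fin d → ℝ) :
    List (Fin d) → Fin d → Fin d → ℝ
  | [], a, b => if a = b then 1 else 0
  | [_], a, b => if a = b then 1 else 0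
  | c :: e :: rest, a, b => ∑ m, rhatC Ω' Rc c e a m * endProdC Ω' Rc rest m b

/-- Pre-Chern form of a list of degrees l = [q₁, …, q_s]: product of traces of the
R̂-products over consecutive blocks of 2q₁, 2q₂, … indices.  Its alternatization is
(up to a nonzero constant) the Chern form c_{q₁} ∧ ⋯ ∧ c_{q_s}. -/
def preChernC {d : ℕ} (Ω' : Fin d → Fin d → ℝ) (Rc : Fin d → Fin d → Fin d → Fin d → ℝ) :
    List ℕ → List (Fin d) → ℝ
  | [], _ => 1
  | q :: rest, ts =>
      (∑ a, endProdC Ω' Rc (ts.take (2 * q)) a a) * preChernC Ω' Rc rest (ts.drop (2 * q))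

/-- Components of the Chern 2k-form attached to a list of degrees with sum k:
the alternatization of the pre-Chern form. -/
def chernC {d : ℕ} (Ω' : Fin d → Fin d → ℝ) (Rc : Fin d → Fin d → Fin d → Fin d → ℝ)
    (k : ℕ) (l : List ℕ) (t : Fin (2 * k) → Fin d) : ℝ :=
  ∑ σ : Equiv.Perm (Fin (2 * k)),
    ((Equiv.Perm.sign σ : ℤ) : ℝ) * preChernC Ω' Rc l (List.ofFn (fun i => t (σ i)))

/-- Components of the wedge power ω ∧ ⋯ ∧ ω (M/2 factors, an M-form):
full signed symmetrization of ω ⊗ ⋯ ⊗ ω. -/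
def omegaAlt {d : ℕ} (Ω : Fin d → Fin d → ℝ) (M : ℕ) (t : Fin M → Fin d) : ℝ :=
  ∑ σ : Equiv.Perm (Fin M),
    ((Equiv.Perm.sign σ : ℤ) : ℝ) *
      ∏ i : Fin (M / 2),
        Ω (t (σ ⟨2 * i.val, by have := i.isLt; omega⟩))
          (t (σ ⟨2 * i.val + 1, by have := i.isLt; omega⟩))

/-- Components of the p-form ⟨ω^{∧(k+p/2)}, c_l(R)⟩: all 2k indices of the Chern
2k-form are raised with Ω' and contracted into the first 2k indices of the
(2k+p)-form ω ∧ ⋯ ∧ ω. -/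
def contrC {d : ℕ} (Ω Ω' : Fin d → Fin d → ℝ) (Rc : Fin d → Fin d → Fin d → Fin d → ℝ)
    (k p : ℕ) (l : List ℕ) (b : Fin p → Fin d) : ℝ :=
  ∑ c : Fin (2 * k) → Fin d, ∑ a : Fin (2 * k) → Fin d,
    chernC Ω' Rc k l c * (∏ i, Ω' (c i) (a i)) * omegaAlt Ω (2 * k + p) (Fin.append a b)

/-- Ricci tensor K_{ij} = ω^{km} R_{mikj}. -/
def RicC {d : ℕ} (Ω' : Fin d → Fin d → ℝ) (Rc : Fin d → Fin d → Fin d → Fin d → ℝ)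
    (i j : Fin d) : ℝ := ∑ k, ∑ m, Ω' k m * Rc m i k j

/-- K_i^j = ω^{jm} K_{im}. -/
def RicMix {d : ℕ} (Ω' : Fin d → Fin d → ℝ) (Rc : Fin d → Fin d → Fin d → Fin d → ℝ)
    (i j : Fin d) : ℝ := ∑ m, Ω' j m * RicC Ω' Rc i m

/-- R^l_{ijk} = ω^{lm} R_{mijk}. -/
def RupF {d : ℕ} (Ω' : Fin d → Fin d → ℝ) (Rc : Fin d → Fin d → Fin d → Fin d → ℝ)
    (l i j k : Fin d) : ℝ := ∑ m, Ω' l m * Rc m i j k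

/-- R_a^{bce} = ω^{bp} ω^{cq} ω^{er} R_{apqr}. -/
def RupL3 {d : ℕ} (Ω' : Fin d → Fin d → ℝ) (Rc : Fin d → Fin d → Fin d → Fin d → ℝ)
    (a b c e : Fin d) : ℝ :=
  ∑ p, ∑ q, ∑ r, Ω' b p * Ω' c q * Ω' e r * Rc a p q r

/-- R^i_{jb}{}^k = ω^{im} ω^{kc} R_{mjbc}. -/
def Rmid {d : ℕ} (Ω' : Fin d → Fin d → ℝ) (Rc : Fin d → Fin d → Fin d → Fin d → ℝ)
    (i j b k : Fin d) : ℝ := ∑ m, ∑ c, Ω' i m * Ω' k c * Rc m j b c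

/-- Components of 2K_i^jK_j^i ω_{ab} − R^l_{ijk}R_l^{ijk} ω_{ab}
+ 4K_i^jR^i_{jab} − 4R^j_{iak}R^i_{jb}{}^k. -/
def Texpr {d : ℕ} (Ω Ω' : Fin d → Fin d → ℝ) (Rc : Fin d → Fin d → Fin d → Fin d → ℝ)
    (a b : Fin d) : ℝ :=
  2 * (∑ i, ∑ j, RicMix Ω' Rc i j * RicMix Ω' Rc j i) * Ω a b
  - (∑ l, ∑ i, ∑ j, ∑ k, RupF Ω' Rc l i j k * RupL3 Ω' Rc l i j k) * Ω a b
  + 4 * (∑ i, ∑ j, RicMix Ω' Rc i j * RupF Ω' Rc i j a b)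
  - 4 * (∑ i, ∑ j, ∑ k, RupF Ω' Rc j i a k * Rmid Ω' Rc i j b k)

/-- The scalar R_{i₁}^{i₂j₁k₁} R_{i₂}^{i₁j₂k₂} (ω∧ω)_{j₁k₁j₂k₂}. -/
def Qscal {d : ℕ} (Ω Ω' : Fin d → Fin d → ℝ) (Rc : Fin d → Fin d → Fin d → Fin d → ℝ) : ℝ :=
  ∑ i₁, ∑ i₂, ∑ j₁, ∑ k₁, ∑ j₂, ∑ k₂,
    RupL3 Ω' Rc i₁ i₂ j₁ k₁ * RupL3 Ω' Rc i₂ i₁ j₂ k₂ * omegaAlt Ω 4 ![j₁, k₁, j₂, k₂]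

/-- Components R_{i₁}^{i₂j₁k₁} R_{i₂}^{i₁j₂k₂} (ω∧ω∧ω)_{j₁k₁j₂k₂ab}. -/
def T2expr {d : ℕ} (Ω Ω' : Fin d → Fin d → ℝ) (Rc : Fin d → Fin d → Fin d → Fin d → ℝ)
    (a b : Fin d) : ℝ :=
  ∑ i₁, ∑ i₂, ∑ j₁, ∑ k₁, ∑ j₂, ∑ k₂,
    RupL3 Ω' Rc i₁ i₂ j₁ k₁ * RupL3 Ω' Rc i₂ i₁ j₂ k₂ *
      omegaAlt Ω 6 ![j₁, k₁, j₂, k₂, a, b]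

/-- Reindexing (x_i, x_j, x_k, …) ↦ (x_j, x_k, x_i, …) on the first three slots. -/
def cyc3 (m : ℕ) : Fin (m + 3) → Fin (m + 3) := fun t =>
  if t.val = 0 then 1 else if t.val = 1 then 2 else if t.val = 2 then 0 else t

/-- Normal tensors of order m on V: (m+3)-linear forms that are symmetric in the 2nd
and 3rd arguments and in the last m arguments, whose symmetrization over the last m+2
arguments vanishes, and (for m ≥ 1) such that
(x_i,x_j,x_k,a…) ↦ T(x_i,x_k,x_j,a…) − T(x_j,x_k,x_i,a…) is symmetric in x_k, x_{a₁}. -/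
def IsNormal {V : Type*} [AddCommGroup V] [Module ℝ V] (m : ℕ)
    (T : MultilinearMap ℝ (fun _ : Fin (m + 3) => V) ℝ) : Prop :=
  (∀ v : Fin (m + 3) → V, T (fun t => v (Equiv.swap (1 : Fin (m + 3)) 2 t)) = T v) ∧
  (∀ v : Fin (m + 3) → V, ∀ σ : Equiv.Perm (Fin (m + 3)),
    σ 0 = 0 → σ 1 = 1 → σ 2 = 2 → T (fun t => v (σ t)) = T v) ∧
  (∀ v : Fin (m + 3) → V,
    ∑ σ ∈ Finset.univ.filter (fun σ : Equiv.Perm (Fin (m + 3)) => σ 0 = 0),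
      T (fun t => v (σ t)) = 0) ∧
  (1 ≤ m → ∀ v : Fin (m + 3) → V,
    (T (fun t => (fun u : Fin (m+3) => v (Equiv.swap (2 : Fin (m+3)) 3 u))
          (Equiv.swap (1 : Fin (m + 3)) 2 t)) -
     T (fun t => (fun u : Fin (m+3) => v (Equiv.swap (2 : Fin (m+3)) 3 u)) (cyc3 m t))) =
    (T (fun t => v (Equiv.swap (1 : Fin (m + 3)) 2 t)) - T (fun t => v (cyc3 m t))))

/-- A tuple of arguments for a map on S^{d₁}N₁ ⊗ ⋯ ⊗ S^{d_r}N_r: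
for each j, dd j tensors of order j+1 (arity j+4). -/
abbrev NTuple (e r : ℕ) (dd : Fin r → ℕ) :=
  ∀ j : Fin r, Fin (dd j) → MForm e (j.val + 1 + 3)

/-- All entries of the tuple are normal tensors. -/
def AllNormal {e r : ℕ} {dd : Fin r → ℕ} (A : NTuple e r dd) : Prop :=
  ∀ j i, IsNormal (j.val + 1) (A j i)

/-- Update a single entry of a tuple. -/
def updTup {e r : ℕ} {dd : Fin r → ℕ} (A : NTuple e r dd) (j : Fin r) (i : Fin (dd j))
    (T : MForm e (j.val + 1 + 3)) : NTuple e r dd :=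
  Function.update A j (Function.update (A j) i T)

/-- Sp-action on tuples of normal tensors. -/
def actTup {e r : ℕ} {dd : Fin r → ℕ} (g : (Fin e → ℝ) →ₗ[ℝ] (Fin e → ℝ))
    (A : NTuple e r dd) : NTuple e r dd := fun j i => actF g (A j i)

/-- Pullback of a tuple of normal tensors along the symplectic projection. -/
def pbTup {e r : ℕ} {dd : Fin r → ℕ} (A : NTuple e r dd) : NTuple (e + 2) r dd :=
  fun j i => pbF (A j i)

/-- Φ corresponds to an Sp-equivariant linear map S^{d₁}N₁ ⊗ ⋯ ⊗ S^{d_r}N_r → (p-forms):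
it is linear in each slot, symmetric within each group of slots, and Sp-equivariant
(all on tuples of normal tensors). -/
def IsGoodN {e r p : ℕ} {dd : Fin r → ℕ} (Φ : NTuple e r dd → MForm e p) : Prop :=
  (∀ A, AllNormal A → ∀ (j : Fin r) (i : Fin (dd j)) S T,
    IsNormal (j.val + 1) S → IsNormal (j.val + 1) T →
      Φ (updTup A j i (S + T)) = Φ (updTup A j i S) + Φ (updTup A j i T)) ∧
  (∀ A, AllNormal A → ∀ (j : Fin r) (i : Fin (dd j)) (c : ℝ) S,
    IsNormal (j.val + 1) S →
      Φ (updTup A j i (c • S)) = c • Φ (updTup A j i S)) ∧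
  (∀ A, AllNormal A → ∀ (j : Fin r) (σ : Equiv.Perm (Fin (dd j))),
      Φ (Function.update A j (fun i => A j (σ i))) = Φ A) ∧
  (∀ g, IsSp e g → ∀ A, AllNormal A → Φ (actTup g A) = actF g (Φ A))

/-- Φ corresponds to an Sp-equivariant linear map S^k𝓡 → (p-forms): linear in each
slot, symmetric, and Sp-equivariant (all on tuples of curvature tensors). -/
def IsGoodC {e k p : ℕ} (Φ : (Fin k → MForm e 4) → MForm e p) : Prop :=
  (∀ A : Fin k → MForm e 4, (∀ i, IsCurv (A i)) → ∀ i S T, IsCurv S → IsCurv T →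
      Φ (Function.update A i (S + T)) =
        Φ (Function.update A i S) + Φ (Function.update A i T)) ∧
  (∀ A : Fin k → MForm e 4, (∀ i, IsCurv (A i)) → ∀ i (c : ℝ) S, IsCurv S →
      Φ (Function.update A i (c • S)) = c • Φ (Function.update A i S)) ∧
  (∀ A : Fin k → MForm e 4, (∀ i, IsCurv (A i)) → ∀ σ : Equiv.Perm (Fin k),
      Φ (fun i => A (σ i)) = Φ A) ∧
  (∀ g, IsSp e g → ∀ A : Fin k → MForm e 4, (∀ i, IsCurv (A i)) →
      Φ (fun i => actF g (A i)) = actF g (Φ A))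

/-- B corresponds to an Sp-invariant linear form on S²𝓡: it is a symmetric bilinear
Sp-invariant function of two curvature tensors. -/
def IsGoodBil {d : ℕ} (B : MForm d 4 → MForm d 4 → ℝ) : Prop :=
  (∀ R S T, IsCurv R → IsCurv S → IsCurv T → B (S + T) R = B S R + B T R) ∧
  (∀ R S (c : ℝ), IsCurv R → IsCurv S → B (c • S) R = c * B S R) ∧
  (∀ R S, IsCurv R → IsCurv S → B R S = B S R) ∧
  (∀ g, IsSp d g → ∀ R S, IsCurv R → IsCurv S → B (actF g R) (actF g S) = B R S)

/-- Φ corresponds to an Sp-equivariant linear map S²𝓡 → (bilinear forms): symmetric,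
bilinear and Sp-equivariant in two curvature arguments. -/
def IsGoodBil2 {d : ℕ} (Φ : MForm d 4 → MForm d 4 → MForm d 2) : Prop :=
  (∀ R S T, IsCurv R → IsCurv S → IsCurv T → Φ (S + T) R = Φ S R + Φ T R) ∧
  (∀ R S (c : ℝ), IsCurv R → IsCurv S → Φ (c • S) R = c • Φ S R) ∧
  (∀ R S, IsCurv R → IsCurv S → Φ R S = Φ S R) ∧
  (∀ g, IsSp d g → ∀ R S, IsCurv R → IsCurv S →
    Φ (actF g R) (actF g S) = actF g (Φ R S))

/-!
The positions of a normal tensor fall into three classes, `{0}`, `{1, 2}` and `{3, …, m + 2}`,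
and `T` is symmetric within each of the last two, so its alternation over two positions of one
class vanishes. Up to these symmetries, the only other triple of positions is `{0, 1, 3}`.
The alternation over `{0, 1, 3}` only depends on the antisymmetrization of `T` in slots 0 and 1,
and condition (3), combined with the symmetry in slots 1 and 2, says exactly that this
antisymmetrization is unchanged by swapping slots 2 and 3. Hence `T` may be replaced by
`T ∘ swap 2 3`, which is symmetric in slots 1 and 3, so the alternation vanishes.
-/

open Equiv Finset

section Alternation

variable {ι α R : Type*} [Fintype ι] [DecidableEq ι] [CommRing R]

def altOn (S : Finset ι) (f : (ι → α) → R) (v : ι → α) : R :=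
  ∑ σ ∈ univ.filter (fun σ : Perm ι => ∀ t ∉ S, σ t = t),
    ((Perm.sign σ : ℤ) : R) * f (fun t => v (σ t))

theorem altOn_eq_zero_of_comp_swap {S : Finset ι} {f : (ι → α) → R} {i j : ι}
    (hi : i ∈ S) (hj : j ∈ S) (hij : i ≠ j)
    (hf : ∀ w, f (fun t => w (swap i j t)) = f w) (v : ι → α) : altOn S f v = 0 := by
  refine sum_involution (fun σ _ => σ * swap i j) (fun σ _ => ?_) (fun σ _ _ => ?_)
    (fun σ hσ => ?_) (fun σ _ => mul_swap_mul_self i j σ)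
  · simp only [Perm.sign_mul, Perm.sign_swap hij, Perm.mul_apply, hf (fun t => v (σ t))]
    push_cast
    ring
  · exact mul_swap_eq_iff.not.2 hij
  · simp only [mem_filter, mem_univ, true_and] at hσ ⊢
    intro t ht
    rw [Perm.mul_apply, swap_apply_of_ne_of_ne (ne_of_mem_of_not_mem hi ht).symm
      (ne_of_mem_of_not_mem hj ht).symm, hσ t ht]

theorem altOn_sub (S : Finset ι) (f g : (ι → α) → R) (v : ι → α) :
    altOn S (fun w => f w - g w) v = altOn S f v - altOn S g v := by
  simp only [altOn, mul_sub, sum_sub_distrib]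

theorem altOn_congr_of_sub_comp_swap {S : Finset ι} {f g : (ι → α) → R} {i j : ι}
    (hi : i ∈ S) (hj : j ∈ S) (hij : i ≠ j)
    (hfg : ∀ w, f w - f (fun t => w (swap i j t)) = g w - g (fun t => w (swap i j t)))
    (v : ι → α) : altOn S f v = altOn S g v := by
  rw [← sub_eq_zero, ← altOn_sub]
  exact altOn_eq_zero_of_comp_swap hi hj hij (fun w => by linear_combination -hfg w) v

theorem altOn_comp_perm {S S' : Finset ι} {f : (ι → α) → R} (τ : Perm ι)
    (hf : ∀ w, f (fun t => w (τ t)) = f w) (hS : ∀ t, t ∈ S' ↔ τ t ∈ S) (v : ι → α) :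
    altOn S f v = altOn S' f (fun t => v (τ t)) := by
  refine sum_nbij' (fun σ => τ⁻¹ * σ * τ) (fun σ => τ * σ * τ⁻¹) (fun σ hσ => ?_)
    (fun σ hσ => ?_) (fun σ _ => by group) (fun σ _ => by group) (fun σ _ => ?_)
  · simp only [mem_filter, mem_univ, true_and, Perm.mul_apply] at hσ ⊢
    intro t ht
    rw [hσ _ ((hS t).not.1 ht), Perm.coe_inv, symm_apply_apply]
  · simp only [mem_filter, mem_univ, true_and, Perm.mul_apply] at hσ ⊢
    intro t ht
    rw [hσ _ (by rwa [hS, Perm.coe_inv, apply_symm_apply]), Perm.coe_inv, apply_symm_apply]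
  · simp only [Perm.sign_mul, Perm.sign_inv, Perm.mul_apply, Perm.coe_inv, apply_symm_apply]
    rw [mul_right_comm, Int.units_mul_self, one_mul, ← hf (fun t => v (σ t))]

end Alternation

theorem Finset.exists_lt_lt_eq_of_ne {ι : Type*} [LinearOrder ι] {a b c : ι}
    (hab : a ≠ b) (hac : a ≠ c) (hbc : b ≠ c) :
    ∃ x y z, x < y ∧ y < z ∧ ({a, b, c} : Finset ι) = {x, y, z} := by
  rcases hab.lt_or_gt with h₁ | h₁ <;> rcases hac.lt_or_gt with h₂ | h₂ <;>
    rcases hbc.lt_or_gt with h₃ | h₃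
  · exact ⟨a, b, c, h₁, h₃, rfl⟩
  · exact ⟨a, c, b, h₂, h₃, pair_comm b c ▸ rfl⟩
  · exact absurd (h₂.trans h₁) h₃.not_gt
  · exact ⟨c, a, b, h₂, h₁, by ext; simp; tauto⟩
  · exact ⟨b, a, c, h₁, h₂, insert_comm a b {c}⟩
  · exact absurd (h₂.trans h₃) h₁.not_gt
  · exact ⟨b, c, a, h₃, h₂, by ext; simp; tauto⟩
  · exact ⟨c, b, a, h₃, h₁, by ext; simp; tauto⟩

theorem cyc3_apply {m : ℕ} (t : Fin (m + 3)) : cyc3 m t = swap 0 1 (swap 1 2 t) := by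
  obtain ⟨_ | _ | _ | n, ht⟩ := t
  · rfl
  · rfl
  · rfl
  · have hne : ∀ i : Fin (m + 3), (i : ℕ) < 3 → (⟨n + 3, ht⟩ : Fin (m + 3)) ≠ i :=
      fun i hi => Fin.ne_of_val_ne (by simp only; omega)
    rw [swap_apply_of_ne_of_ne (hne 1 (by simp)) (hne 2 (by rw [Fin.val_two]; omega)),
      swap_apply_of_ne_of_ne (hne 0 (by simp)) (hne 1 (by simp))]
    rfl

namespace IsNormal

variable {V : Type*} [AddCommGroup V] [Module ℝ V] {m : ℕ}
  {T : MultilinearMap ℝ (fun _ : Fin (m + 3) => V) ℝ}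

theorem comp_swap_of_three_le (hT : IsNormal m T) {i j : Fin (m + 3)}
    (hi : 3 ≤ (i : ℕ)) (hj : 3 ≤ (j : ℕ)) (v : Fin (m + 3) → V) :
    T (fun t => v (swap i j t)) = T v := by
  have hne : ∀ s : Fin (m + 3), (s : ℕ) < 3 → s ≠ i ∧ s ≠ j :=
    fun s hs => ⟨Fin.ne_of_val_ne (by omega), Fin.ne_of_val_ne (by omega)⟩
  refine hT.2.1 v (swap i j) ?_ ?_ ?_ <;>
    exact swap_apply_of_ne_of_ne (hne _ (by simp (disch := omega) [Nat.mod_eq_of_lt])).1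
      (hne _ (by simp (disch := omega) [Nat.mod_eq_of_lt])).2

theorem comp_cyc3 (hT : IsNormal m T) (v : Fin (m + 3) → V) :
    T (fun t => v (cyc3 m t)) = T (fun t => v (swap 0 1 t)) := by
  simp only [cyc3_apply]
  exact hT.1 (fun t => v (swap 0 1 t))

theorem sub_comp_swap_zero_one_eq_comp_swap_two_three (hT : IsNormal m T) (hm : 1 ≤ m)
    (v : Fin (m + 3) → V) :
    T v - T (fun t => v (swap 0 1 t)) =
      T (fun t => v (swap 2 3 t)) - T (fun t => v (swap 0 1 (swap 2 3 t))) := by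
  have hcomm : ∀ t : Fin (m + 3), swap 2 3 (swap 0 1 t) = swap 0 1 (swap 2 3 t) := by
    have hnodup : [(0 : Fin (m + 3)), 1, 2, 3].Nodup := by
      simp (disch := omega) [Fin.ext_iff, Nat.mod_eq_of_lt]
    exact fun t => congrArg (· t) ((Perm.disjoint_swap_swap hnodup).commute.eq.symm)
  have hD := hT.2.2.2 hm v
  have h₁ := hT.1 (fun t => v (swap 2 3 t))
  have h₂ := hT.comp_cyc3 (fun t => v (swap 2 3 t))
  simp only [hT.1 v, hT.comp_cyc3 v, hcomm] at hD h₁ h₂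
  linarith

theorem altOn_zero_one_three_eq_zero (hT : IsNormal m T) (hm : 1 ≤ m) (v : Fin (m + 3) → V) :
    altOn {0, 1, 3} T v = 0 := by
  have h01 : (0 : Fin (m + 3)) ≠ 1 := Fin.ne_of_val_ne (by simp)
  have h12 : (1 : Fin (m + 3)) ≠ 2 :=
    Fin.ne_of_val_ne (by simp (disch := omega) [Nat.mod_eq_of_lt])
  have h13 : (1 : Fin (m + 3)) ≠ 3 :=
    Fin.ne_of_val_ne (by simp (disch := omega) [Nat.mod_eq_of_lt])
  have hcycle : swap 1 3 * swap 2 3 = swap 2 3 * swap (1 : Fin (m + 3)) 2 := by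
    rw [swap_mul_eq_mul_swap, swap_inv, swap_apply_of_ne_of_ne h12 h13, swap_apply_right]
  rw [altOn_congr_of_sub_comp_swap (i := 0) (j := 1) (by simp) (by simp) h01
    (hT.sub_comp_swap_zero_one_eq_comp_swap_two_three hm)]
  refine altOn_eq_zero_of_comp_swap (i := 1) (j := 3) (by simp) (by simp) h13 (fun w => ?_) v
  simpa only [← Perm.mul_apply, hcycle] using hT.1 (fun t => w (swap 2 3 t))

theorem altOn_zero_mid_tail_eq_zero (hT : IsNormal m T) {e k : Fin (m + 3)}
    (he : e = 1 ∨ e = 2) (hk : 3 ≤ (k : ℕ)) (v : Fin (m + 3) → V) : altOn {0, e, k} T v = 0 := by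
  have hm : 1 ≤ m := by omega
  have h3 : 3 ≤ ((3 : Fin (m + 3)) : ℕ) := by simp (disch := omega) [Nat.mod_eq_of_lt]
  have hne : ∀ s : Fin (m + 3), (s : ℕ) < 3 → s ≠ 3 ∧ s ≠ k := fun s hs =>
    ⟨Fin.ne_of_val_ne (by omega), Fin.ne_of_val_ne (by omega)⟩
  have h013k : ∀ w, altOn {0, 1, k} T w = 0 := fun w => by
    rw [altOn_comp_perm (swap 3 k) (hT.comp_swap_of_three_le h3 hk) (S' := {0, 1, 3})]
    · exact hT.altOn_zero_one_three_eq_zero hm _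
    · intro t
      simp only [mem_insert, mem_singleton, swap_apply_eq_iff, swap_apply_right,
        swap_apply_of_ne_of_ne (hne 0 (by simp)).1 (hne 0 (by simp)).2,
        swap_apply_of_ne_of_ne (hne 1 (by simp)).1 (hne 1 (by simp)).2]
  rcases he with rfl | rfl
  · exact h013k v
  · rw [altOn_comp_perm (swap 1 2) hT.1 (S' := {0, 1, k})]
    · exact h013k _
    · intro t
      have h2 : ((2 : Fin (m + 3)) : ℕ) = 2 := Fin.val_two
      simp only [mem_insert, mem_singleton, swap_apply_eq_iff, swap_apply_right,
        swap_apply_of_ne_of_ne (hne 1 (by simp)).2.symm (hne 2 (by omega)).2.symm,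
        swap_apply_of_ne_of_ne (Fin.ne_of_val_ne (by simp) : (0 : Fin (m + 3)) ≠ 1)
          (Fin.ne_of_val_ne (by rw [h2]; simp) : (0 : Fin (m + 3)) ≠ 2)]

theorem altOn_eq_zero (hT : IsNormal m T) {a b c : Fin (m + 3)}
    (hab : a ≠ b) (hac : a ≠ c) (hbc : b ≠ c) (v : Fin (m + 3) → V) :
    altOn {a, b, c} T v = 0 := by
  obtain ⟨x, y, z, hxy, hyz, hS⟩ := Finset.exists_lt_lt_eq_of_ne hab hac hbc
  rw [hS]
  have hxy' : (x : ℕ) < y := hxy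
  have hyz' : (y : ℕ) < z := hyz
  by_cases hy : 3 ≤ (y : ℕ)
  · exact altOn_eq_zero_of_comp_swap (by simp) (by simp) hyz.ne
      (hT.comp_swap_of_three_le hy (by omega)) v
  by_cases hx : (x : ℕ) = 0
  · obtain rfl : x = 0 := Fin.ext hx
    by_cases hz : 3 ≤ (z : ℕ)
    · refine hT.altOn_zero_mid_tail_eq_zero ?_ hz v
      rcases (by omega : (y : ℕ) = 1 ∨ (y : ℕ) = 2) with h | h
      · exact .inl (Fin.ext (by rw [h, Fin.val_one]))
      · exact .inr (Fin.ext (by rw [h, Fin.val_two]))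
    · obtain rfl : y = 1 := Fin.ext (by rw [Fin.val_one]; omega)
      obtain rfl : z = 2 := Fin.ext (by rw [Fin.val_two]; omega)
      exact altOn_eq_zero_of_comp_swap (by simp) (by simp) hyz.ne hT.1 v
  · obtain rfl : x = 1 := Fin.ext (by rw [Fin.val_one]; omega)
    obtain rfl : y = 2 := Fin.ext (by rw [Fin.val_two]; omega)
    exact altOn_eq_zero_of_comp_swap (by simp) (by simp) hxy.ne hT.1 v

end IsNormal

theorem statement_4_general (V : Type*) [AddCommGroup V] [Module ℝ V]
    (m : ℕ) (T : MultilinearMap ℝ (fun _ : Fin (m + 3) => V) ℝ) (hT : IsNormal m T)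
    (a b c : Fin (m + 3)) (hab : a ≠ b) (hac : a ≠ c) (hbc : b ≠ c)
    (v : Fin (m + 3) → V) :
    ∑ σ ∈ Finset.univ.filter
        (fun σ : Equiv.Perm (Fin (m + 3)) =>
          ∀ t : Fin (m + 3), t ≠ a → t ≠ b → t ≠ c → σ t = t),
      ((Equiv.Perm.sign σ : ℤ) : ℝ) * T (fun t => v (σ t)) = 0 := by
  simpa only [altOn, mem_insert, mem_singleton, not_or, and_imp] using
    hT.altOn_eq_zero hab hac hbc v

/-- the alternation of a normal tensor of order m over any three distinct
argument positions vanishes. -/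
theorem statement_4 (V : Type*) [AddCommGroup V] [Module ℝ V] [FiniteDimensional ℝ V]
    (m : ℕ) (T : MultilinearMap ℝ (fun _ : Fin (m + 3) => V) ℝ) (hT : IsNormal m T)
    (a b c : Fin (m + 3)) (hab : a ≠ b) (hac : a ≠ c) (hbc : b ≠ c)
    (v : Fin (m + 3) → V) :
    ∑ σ ∈ Finset.univ.filter
        (fun σ : Equiv.Perm (Fin (m + 3)) =>
          ∀ t : Fin (m + 3), t ≠ a → t ≠ b → t ≠ c → σ t = t),
      ((Equiv.Perm.sign σ : ℤ) : ℝ) * T (fun t => v (σ t)) = 0 :=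
  statement_4_general V m T hT a b c hab hac hbc v
end
end

section
/- Let p ≥ 0 be even, k ≥ 1, and let (V, ω) be a real symplectic vector space with dim V ≤ 2k + p − 2. Then for every R ∈ 𝓡(V) and every Chern 2k-form c of R, the p-form ⟨ω^{∧(k+p/2)}, c⟩ on V vanishes identically. -/
noncomputable section

/-- An alternating expression vanishes when two arguments coincide. -/
theorem omegaAlt_zero {d M : ℕ} (Ω : Fin d → Fin d → ℝ) (t : Fin M → Fin d)
    (i j : Fin M) (hij : i ≠ j) (ht : t i = t j) : omegaAlt Ω M t = 0 := by
  have key : omegaAlt Ω M t = - omegaAlt Ω M t := by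
    unfold omegaAlt
    rw [← Finset.sum_neg_distrib]
    exact Fintype.sum_bijective (fun σ => Equiv.swap i j * σ)
      (Group.mulLeft_bijective _) _ _ (fun σ => by
        have hs : ∀ x : Fin M, t (Equiv.swap i j x) = t x := by
          intro x
          rcases eq_or_ne x i with rfl | hxi
          · rw [Equiv.swap_apply_left]; exact ht.symm
          rcases eq_or_ne x j with rfl | hxj
          · rw [Equiv.swap_apply_right]; exact ht
          · rw [Equiv.swap_apply_of_ne_of_ne hxi hxj]
        simp only [Equiv.Perm.mul_apply, hs, Equiv.Perm.sign_mul,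
          Equiv.Perm.sign_swap hij]
        push_cast
        ring)
  linarith

/-- let p be even, k ≥ 1 and (V, ω) a symplectic vector space of
dimension ≤ 2k + p − 2.  Then for every algebraic symplectic curvature tensor R and
every Chern 2k-form c of R (attached to a list of degrees with sum k), the p-form
⟨ω^{∧(k+p/2)}, c⟩ vanishes identically.  (Ω, Ω' are the components of ω and of its
inverse in a fixed basis, Rc those of R; `contrC` raises the 2k indices of the Chern
form with Ω' and contracts them into the first 2k indices of the (2k+p)-form
ω ∧ ⋯ ∧ ω.) -/
theorem statement_11 (p k d : ℕ) (hp : Even p) (hk : 1 ≤ k)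
    (hd : d + 2 ≤ 2 * k + p)
    (Ω Ω' : Fin d → Fin d → ℝ)
    (hskew : ∀ i j, Ω j i = - Ω i j)
    (hinv : ∀ i j, (∑ x, Ω' i x * Ω j x) = if i = j then (1 : ℝ) else 0)
    (Rc : Fin d → Fin d → Fin d → Fin d → ℝ) (hR : IsCurvC Rc)
    (l : List ℕ) (hsum : l.sum = k) (hpos : ∀ a ∈ l, 1 ≤ a) :
    ∀ b : Fin p → Fin d, contrC Ω Ω' Rc k p l b = 0 := by
  intro b
  unfold contrC
  refine Finset.sum_eq_zero fun c _ => Finset.sum_eq_zero fun a _ => ?_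
  obtain ⟨i, j, hij, ht⟩ := Fintype.exists_ne_map_eq_of_card_lt (Fin.append a b)
    (by simpa using by omega : Fintype.card (Fin d) < Fintype.card (Fin (2 * k + p)))
  rw [omegaAlt_zero Ω _ i j hij ht, mul_zero]
end
end
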